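/- arXiv:2207.07499 — 3 statements merged into one kernel-verified Lean document; each statement's English description precedes it below -/
import Mathlib

section
/- Energy boost for an irregular partition: Let G be a finite graph, ε > 0, and P a partition of V(G) into k finite nonempty parts that is not ε-regular. Then there exists a partition Q of V(G) refining P such that the mean square density of Q is at least that of P plus ε⁵, each part R ∈ P contains at most 2^{k+1} parts of Q, and |Q| ≤ k·2^{k+1}. -/
open Finset
open scoped Classical

/-- The number of ordered pairs `(x, y) ∈ X × Y` joined by an edge of `G`. -/
noncomputable def edgeCount {V : Type*} (G : SimpleGraph V) (X Y : Finset V) : ℕ :=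
  ((X ×ˢ Y).filter fun p => G.Adj p.1 p.2).card

/-- The edge density `d(X,Y) = e(X,Y) / (|X| |Y|)`. -/
noncomputable def density {V : Type*} (G : SimpleGraph V) (X Y : Finset V) : ℝ :=
  (edgeCount G X Y : ℝ) / ((X.card : ℝ) * (Y.card : ℝ))

/-- `(X, Y)` is an `ε`-regular pair in `G`. -/
def IsRegularPair {V : Type*} (G : SimpleGraph V) (X Y : Finset V) (ε : ℝ) : Prop :=
  ∀ A ⊆ X, ∀ B ⊆ Y, ε * X.card ≤ A.card → ε * Y.card ≤ B.card →
    |density G A B - density G X Y| ≤ ε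

/-- The energy `q(U,W) = |U| |W| d(U,W)² / |V(G)|²` of a pair of vertex subsets. -/
noncomputable def energy {V : Type*} [Fintype V] (G : SimpleGraph V) (U W : Finset V) : ℝ :=
  (U.card : ℝ) * (W.card : ℝ) * (density G U W) ^ 2 / (Fintype.card V : ℝ) ^ 2

/-- The mean square density of a family of parts. -/
noncomputable def meanSquareDensity {V : Type*} [Fintype V] (G : SimpleGraph V)
    (P : Finset (Finset V)) : ℝ :=
  ∑ R ∈ P, ∑ S ∈ P, energy G R S

/-!
Cut every part `X` of `P` along the witnesses of irregularity of the pairs `(X, Y)`, `Y ∈ P`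
(`Finpartition.atomise`); choosing them symmetrically, `X` is cut along at most `|P| + 1` sets.
Refining a pair `(X, Y)` raises its energy by the `|R||S|`-weighted variance of the densities
`d(R, S)` of its subpairs, divided by `n²`. If `(A, B)` witnesses irregularity, the subpairs
inside `A × B` and Cauchy–Schwarz bound that variance below by
`|A||B| (d(A, B) - d(X, Y))² ≥ ε⁴ |X||Y|`. The irregular pairs carry weight more than `ε n²`,
so the total gain exceeds `ε⁵`.
-/

section WeightedVariance

variable {ι R : Type*} [CommRing R] (s : Finset ι) (w d : ι → R) (c : R)

theorem sum_mul_sq_eq_add_sum_mul_sub_sq (h : ∑ i ∈ s, w i * d i = c * ∑ i ∈ s, w i) :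
    ∑ i ∈ s, w i * d i ^ 2 = c ^ 2 * ∑ i ∈ s, w i + ∑ i ∈ s, w i * (d i - c) ^ 2 := by
  have expand : ∀ i ∈ s, w i * (d i - c) ^ 2 = w i * d i ^ 2 - 2 * c * (w i * d i) + c ^ 2 * w i :=
    fun i _ => by ring
  rw [sum_congr rfl expand, sum_add_distrib, sum_sub_distrib, ← mul_sum, ← mul_sum, h]
  ring

theorem sq_sum_mul_sub_le [LinearOrder R] [IsStrictOrderedRing R] {t : Finset ι} (hts : t ⊆ s)
    (hw : ∀ i ∈ s, 0 ≤ w i) :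
    (∑ i ∈ t, w i * (d i - c)) ^ 2 ≤ (∑ i ∈ t, w i) * ∑ i ∈ s, w i * (d i - c) ^ 2 := by
  have hwt : ∀ i ∈ t, 0 ≤ w i := fun i hi => hw i (hts hi)
  calc (∑ i ∈ t, w i * (d i - c)) ^ 2
      ≤ (∑ i ∈ t, w i) * ∑ i ∈ t, w i * (d i - c) ^ 2 :=
        sum_sq_le_sum_mul_sum_of_sq_le_mul t hwt
          (fun i hi => mul_nonneg (hwt i hi) (sq_nonneg _)) (fun i _ => (by ring : _ = _).le)
    _ ≤ (∑ i ∈ t, w i) * ∑ i ∈ s, w i * (d i - c) ^ 2 := by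
        gcongr
        · exact sum_nonneg hwt
        · exact fun i hi _ => mul_nonneg (hw i hi) (sq_nonneg _)

end WeightedVariance

section Density

variable {V : Type*} (G : SimpleGraph V) {X Y A B : Finset V}

theorem density_eq_edgeDensity (X Y : Finset V) : density G X Y = G.edgeDensity X Y := by
  rw [density, SimpleGraph.edgeDensity_def, edgeCount]
  push_cast
  rfl

theorem card_mul_card_mul_density (X Y : Finset V) :
    (#X * #Y : ℝ) * density G X Y = #(G.interedges X Y) := by
  rcases eq_or_ne (#X * #Y : ℝ) 0 with h | h
  · have hle := G.card_interedges_le_mul X Y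
    have : #X * #Y = 0 := by exact_mod_cast h
    rw [h, zero_mul]
    exact_mod_cast (Nat.le_zero.1 (this ▸ hle)).symm
  · rw [density, mul_div_cancel₀ _ h]
    rfl

theorem sum_card_mul_card (PX : Finpartition X) (PY : Finpartition Y) :
    ∑ p ∈ PX.parts ×ˢ PY.parts, (#p.1 * #p.2 : ℝ) = #X * #Y := by
  rw [sum_product' (f := fun R S => (#R * #S : ℝ)), ← sum_mul_sum]
  exact_mod_cast congrArg₂ (· * ·) PX.sum_card_parts PY.sum_card_parts

theorem sum_card_mul_card_mul_density (PX : Finpartition X) (PY : Finpartition Y) :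
    ∑ p ∈ PX.parts ×ˢ PY.parts, (#p.1 * #p.2 : ℝ) * density G p.1 p.2
      = #X * #Y * density G X Y := by
  simp only [card_mul_card_mul_density]
  exact_mod_cast (Rel.card_interedges_finpartition G.Adj PX PY).symm

theorem isRegularPair_of_isUniform {ε : ℝ} (h : G.IsUniform ε X Y) : IsRegularPair G X Y ε :=
  fun A hA B hB hAc hBc => by
    simpa only [density_eq_edgeDensity] using
      (h hA hB (by linarith) (by linarith)).le

theorem card_mul_card_mul_sq_le_sum (PX : Finpartition X) (PY : Finpartition Y)
    (QA : Finpartition A) (QB : Finpartition B) (hA : QA.parts ⊆ PX.parts)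
    (hB : QB.parts ⊆ PY.parts) :
    (#A * #B : ℝ) * (density G A B - density G X Y) ^ 2 ≤
      ∑ p ∈ PX.parts ×ˢ PY.parts,
        (#p.1 * #p.2 : ℝ) * (density G p.1 p.2 - density G X Y) ^ 2 := by
  set c := density G X Y
  set S := ∑ p ∈ PX.parts ×ˢ PY.parts, (#p.1 * #p.2 : ℝ) * (density G p.1 p.2 - c) ^ 2
  have hCS := sq_sum_mul_sub_le _ (fun p => (#p.1 * #p.2 : ℝ)) (fun p => density G p.1 p.2) c
    (product_subset_product hA hB) (fun p _ => by positivity)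
  have hcentre : ∑ p ∈ QA.parts ×ˢ QB.parts, (#p.1 * #p.2 : ℝ) * (density G p.1 p.2 - c)
      = #A * #B * (density G A B - c) := by
    simp only [mul_sub, sum_sub_distrib, ← sum_mul, sum_card_mul_card_mul_density,
      sum_card_mul_card]
  rw [hcentre, sum_card_mul_card] at hCS
  have hS : 0 ≤ S := sum_nonneg fun p _ => by positivity
  rcases (show (0 : ℝ) ≤ #A * #B by positivity).eq_or_lt with h | h
  · rw [← h, zero_mul]
    exact hS
  · nlinarith

end Density

section Energy

variable {V : Type*} [Fintype V] (G : SimpleGraph V) {X Y A B : Finset V}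

theorem sum_energy_eq_energy_add (PX : Finpartition X) (PY : Finpartition Y) :
    ∑ p ∈ PX.parts ×ˢ PY.parts, energy G p.1 p.2 = energy G X Y +
      (∑ p ∈ PX.parts ×ˢ PY.parts,
        (#p.1 * #p.2 : ℝ) * (density G p.1 p.2 - density G X Y) ^ 2) / (Fintype.card V) ^ 2 := by
  have hvar := sum_mul_sq_eq_add_sum_mul_sub_sq (PX.parts ×ˢ PY.parts)
    (fun p => (#p.1 * #p.2 : ℝ)) (fun p => density G p.1 p.2) (density G X Y)
    (by rw [sum_card_mul_card_mul_density, sum_card_mul_card]; ring)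
  rw [sum_card_mul_card] at hvar
  simp only [energy, ← sum_div, hvar]
  ring

theorem energy_add_le_sum_energy (PX : Finpartition X) (PY : Finpartition Y)
    (QA : Finpartition A) (QB : Finpartition B) (hA : QA.parts ⊆ PX.parts)
    (hB : QB.parts ⊆ PY.parts) :
    energy G X Y + (#A * #B : ℝ) * (density G A B - density G X Y) ^ 2 / (Fintype.card V) ^ 2
      ≤ ∑ p ∈ PX.parts ×ˢ PY.parts, energy G p.1 p.2 := by
  rw [sum_energy_eq_energy_add]
  gcongr
  exact card_mul_card_mul_sq_le_sum G PX PY QA QB hA hB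

theorem energy_le_sum_energy (PX : Finpartition X) (PY : Finpartition Y) :
    energy G X Y ≤ ∑ p ∈ PX.parts ×ˢ PY.parts, energy G p.1 p.2 := by
  rw [sum_energy_eq_energy_add, le_add_iff_nonneg_right]
  positivity

end Energy

section NonuniformRefinement

variable {V : Type*} {s X Y : Finset V}

theorem Finpartition.exists_subset_atomise {F : Finset (Finset V)} {A : Finset V} (hA : A ∈ F)
    (hAs : A ⊆ s) : ∃ QA : Finpartition A, QA.parts ⊆ (Finpartition.atomise s F).parts :=
  ⟨(Finpartition.atomise s F).ofSubset (filter_subset _ _)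
      (by rw [sup_eq_biUnion, Finpartition.biUnion_filter_atomise hA hAs]),
    filter_subset _ _⟩

theorem Finpartition.filter_subset_bind_parts {P : Finpartition s}
    {Q : ∀ X ∈ P.parts, Finpartition X} (hX : X ∈ P.parts) :
    {S ∈ (P.bind Q).parts | S ⊆ X} ⊆ (Q X hX).parts := by
  intro S hS
  obtain ⟨hSQ, hSX⟩ := mem_filter.1 hS
  obtain ⟨Y, hY, hSY⟩ := Finpartition.mem_bind.1 hSQ
  obtain ⟨a, ha⟩ := (Q Y hY).nonempty_of_mem_parts hSY
  obtain rfl : Y = X := P.eq_of_mem_parts hY hX ((Q Y hY).le hSY ha) (hSX ha)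
  exact hSY

variable (G : SimpleGraph V) (ε : ℝ)

/-- `G.nonuniformWitness ε X Y` and `G.nonuniformWitness ε Y X` jointly witness the irregularity of
`(X, Y)` when `X ≠ Y`, so one set per part of `P` suffices; the diagonal pair `(X, X)` needs the
extra set. -/
noncomputable def nonuniformWitnessFamily (P : Finpartition s) (X : Finset V) :
    Finset (Finset V) :=
  insert (G.nonuniformWitnesses ε X X).1 (P.parts.image (G.nonuniformWitness ε X))

theorem card_nonuniformWitnessFamily_le (P : Finpartition s) (X : Finset V) :
    #(nonuniformWitnessFamily G ε P X) ≤ #P.parts + 1 :=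
  (card_insert_le _ _).trans (Nat.add_le_add_right card_image_le 1)

theorem exists_mem_nonuniformWitnessFamily {P : Finpartition s} (hX : X ∈ P.parts)
    (hY : Y ∈ P.parts) (h : ¬ G.IsUniform ε X Y) :
    ∃ A ∈ nonuniformWitnessFamily G ε P X, ∃ B ∈ nonuniformWitnessFamily G ε P Y,
      A ⊆ X ∧ B ⊆ Y ∧ #X * ε ≤ #A ∧ #Y * ε ≤ #B ∧
        ε ≤ |density G A B - density G X Y| := by
  simp only [density_eq_edgeDensity]
  rcases eq_or_ne X Y with rfl | hXY
  · have hB : G.nonuniformWitness ε X X = (G.nonuniformWitnesses ε X X).2 := by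
      rw [SimpleGraph.nonuniformWitness, if_neg (irrefl X)]
    refine ⟨_, mem_insert_self _ _, _, mem_insert_of_mem (mem_image_of_mem _ hX),
      G.left_nonuniformWitnesses_subset h, ?_, G.left_nonuniformWitnesses_card h, ?_, ?_⟩ <;>
      rw [hB]
    · exact G.right_nonuniformWitnesses_subset h
    · exact G.right_nonuniformWitnesses_card h
    · simpa using G.nonuniformWitnesses_spec h
  · exact ⟨_, mem_insert_of_mem (mem_image_of_mem _ hY), _,
      mem_insert_of_mem (mem_image_of_mem _ hX), G.nonuniformWitness_subset h,
      G.nonuniformWitness_subset fun h' => h h'.symm, G.le_card_nonuniformWitness h,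
      G.le_card_nonuniformWitness fun h' => h h'.symm, by
        simpa using G.nonuniformWitness_spec hXY h⟩

theorem card_atomise_nonuniformWitnessFamily_le (P : Finpartition s) (X : Finset V) :
    #(Finpartition.atomise X (nonuniformWitnessFamily G ε P X)).parts ≤ 2 ^ (#P.parts + 1) :=
  Finpartition.card_atomise_le.trans
    (Nat.pow_le_pow_right two_pos (card_nonuniformWitnessFamily_le G ε P X))

noncomputable def nonuniformRefinement (P : Finpartition s) : Finpartition s :=
  P.bind fun X _ => Finpartition.atomise X (nonuniformWitnessFamily G ε P X)

theorem card_filter_subset_nonuniformRefinement_le {P : Finpartition s} (hX : X ∈ P.parts) :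
    #{S ∈ (nonuniformRefinement G ε P).parts | S ⊆ X} ≤ 2 ^ (#P.parts + 1) :=
  (card_le_card (Finpartition.filter_subset_bind_parts hX)).trans
    (card_atomise_nonuniformWitnessFamily_le G ε P X)

theorem card_nonuniformRefinement_le (P : Finpartition s) :
    #(nonuniformRefinement G ε P).parts ≤ #P.parts * 2 ^ (#P.parts + 1) :=
  calc #(nonuniformRefinement G ε P).parts
      = ∑ X ∈ P.parts.attach,
          #(Finpartition.atomise X.1 (nonuniformWitnessFamily G ε P X)).parts :=
        Finpartition.card_bind _
    _ ≤ ∑ _X ∈ P.parts.attach, 2 ^ (#P.parts + 1) :=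
        sum_le_sum fun X _ => card_atomise_nonuniformWitnessFamily_le G ε P X
    _ = #P.parts * 2 ^ (#P.parts + 1) := by rw [sum_const, card_attach, smul_eq_mul]

end NonuniformRefinement

section RefinementEnergy

variable {V : Type*} [Fintype V] (G : SimpleGraph V) (ε : ℝ) {s : Finset V}

theorem meanSquareDensity_bind (P : Finpartition s) (R : ∀ X : Finset V, Finpartition X) :
    meanSquareDensity G (P.bind fun X _ => R X).parts =
      ∑ X ∈ P.parts, ∑ Y ∈ P.parts, ∑ p ∈ (R X).parts ×ˢ (R Y).parts, energy G p.1 p.2 := by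
  have sum_bind : ∀ f : Finset V → ℝ,
      ∑ S ∈ (P.bind fun X _ => R X).parts, f S = ∑ X ∈ P.parts, ∑ S ∈ (R X).parts, f S :=
    fun f => (Finpartition.sum_combine _ P.supIndep.attach f).trans
      (sum_attach P.parts fun X => ∑ S ∈ (R X).parts, f S)
  simp only [meanSquareDensity, sum_bind, sum_product]
  exact sum_congr rfl fun X _ => sum_comm

theorem energy_add_le_sum_energy_atomise (hε : 0 ≤ ε) {P : Finpartition s} {X Y : Finset V}
    (hX : X ∈ P.parts) (hY : Y ∈ P.parts) (h : ¬ IsRegularPair G X Y ε) :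
    energy G X Y + ε ^ 4 * (#X * #Y) / (Fintype.card V) ^ 2 ≤
      ∑ p ∈ (Finpartition.atomise X (nonuniformWitnessFamily G ε P X)).parts ×ˢ
        (Finpartition.atomise Y (nonuniformWitnessFamily G ε P Y)).parts, energy G p.1 p.2 := by
  obtain ⟨A, hAF, B, hBF, hAX, hBY, hAc, hBc, hd⟩ := exists_mem_nonuniformWitnessFamily G ε hX hY
    (mt (isRegularPair_of_isUniform G) h)
  obtain ⟨QA, hQA⟩ := Finpartition.exists_subset_atomise hAF hAX
  obtain ⟨QB, hQB⟩ := Finpartition.exists_subset_atomise hBF hBY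
  refine le_trans ?_ (energy_add_le_sum_energy G _ _ QA QB hQA hQB)
  have hd2 : ε ^ 2 ≤ (density G A B - density G X Y) ^ 2 := by
    simpa only [sq_abs] using pow_le_pow_left₀ hε hd 2
  gcongr energy G X Y + ?_ / _
  calc ε ^ 4 * (#X * #Y) = (#X * ε) * (#Y * ε) * ε ^ 2 := by ring
    _ ≤ #A * #B * (density G A B - density G X Y) ^ 2 := by gcongr

theorem meanSquareDensity_add_le_nonuniformRefinement (hε : 0 ≤ ε) (P : Finpartition s) :
    meanSquareDensity G P.parts + ε ^ 4 * (∑ R ∈ P.parts, ∑ S ∈ P.parts,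
        if ¬ IsRegularPair G R S ε then (#R * #S : ℝ) else 0) / (Fintype.card V) ^ 2 ≤
      meanSquareDensity G (nonuniformRefinement G ε P).parts := by
  rw [nonuniformRefinement, meanSquareDensity_bind, meanSquareDensity]
  simp only [mul_sum, sum_div, ← sum_add_distrib]
  gcongr with X hX Y hY
  split_ifs with h
  · simpa using energy_le_sum_energy G _ _
  · exact energy_add_le_sum_energy_atomise G ε hε hX hY h

end RefinementEnergy

/-- Energy boost for an irregular partition: any `ε`-irregular partition of the
vertex set into `k` parts admits a refinement whose mean square density is larger
by at least `ε ^ 5`, where each part is split into at most `2 ^ (k + 1)` pieces,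
so the refinement has at most `k * 2 ^ (k + 1)` parts. -/
theorem energy_boost_irregular_partition {V : Type*} [Fintype V] (G : SimpleGraph V)
    (ε : ℝ) (hε : 0 < ε) (P : Finpartition (univ : Finset V))
    (hirr : ¬ (∑ R ∈ P.parts, ∑ S ∈ P.parts,
        (if ¬ IsRegularPair G R S ε then ((R.card : ℝ) * (S.card : ℝ)) else 0))
          ≤ ε * (Fintype.card V : ℝ) ^ 2) :
    ∃ Q : Finpartition (univ : Finset V),
      (∀ S ∈ Q.parts, ∃ R ∈ P.parts, S ⊆ R) ∧
      meanSquareDensity G P.parts + ε ^ 5 ≤ meanSquareDensity G Q.parts ∧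
      (∀ R ∈ P.parts, (Q.parts.filter (· ⊆ R)).card ≤ 2 ^ (P.parts.card + 1)) ∧
      Q.parts.card ≤ P.parts.card * 2 ^ (P.parts.card + 1) := by
  have hV : Nonempty V := by
    by_contra hV
    rw [not_nonempty_iff] at hV
    simp [eq_empty_of_isEmpty] at hirr
  have hn : (0 : ℝ) < (Fintype.card V) ^ 2 := by positivity
  refine ⟨nonuniformRefinement G ε P, fun S hS => ?_, ?_,
    fun R hR => card_filter_subset_nonuniformRefinement_le G ε hR,
    card_nonuniformRefinement_le G ε P⟩
  · obtain ⟨X, hX, hSX⟩ := Finpartition.mem_bind.1 hS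
    exact ⟨X, hX, Finpartition.le _ hSX⟩
  · refine le_trans ?_ (meanSquareDensity_add_le_nonuniformRefinement G ε hε.le P)
    rw [add_le_add_iff_left, le_div_iff₀ hn, pow_succ, mul_assoc]
    gcongr
    exact (not_le.1 hirr).le
end

section
/- Refining partitions cannot decrease energy: Let G be a finite simple graph, V, V' finite sets of vertices, P a partition of V refined by a partition Q of V, and P' a partition of V' refined by a partition Q' of V'. Then q(P,P') ≤ q(Q,Q'), where q(P,P') = Σ_{R∈P} Σ_{S∈P'} q(R,S). -/
open Finset
open scoped Classical

private lemma density_nonneg {V : Type*} (G : SimpleGraph V) (X Y : Finset V) :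
    0 ≤ density G X Y := by
  unfold density; positivity

private lemma edgeCount_eq_sum {V : Type*} (G : SimpleGraph V) (X Y : Finset V) :
    edgeCount G X Y = ∑ x ∈ X, ∑ y ∈ Y, if G.Adj x y then 1 else 0 := by
  rw [edgeCount, card_filter, Finset.sum_product]

private lemma edgeCount_biUnion {V : Type*} (G : SimpleGraph V) (t s : Finset (Finset V))
    (ht : (t : Set (Finset V)).PairwiseDisjoint id)
    (hs : (s : Set (Finset V)).PairwiseDisjoint id) :
    edgeCount G (t.biUnion id) (s.biUnion id)
      = ∑ r ∈ t, ∑ c ∈ s, edgeCount G r c := by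
  simp_rw [edgeCount_eq_sum]
  rw [Finset.sum_biUnion ht]
  refine Finset.sum_congr rfl fun r _ => ?_
  simp only [id_eq]
  rw [Finset.sum_comm, Finset.sum_biUnion hs]
  exact Finset.sum_congr rfl fun c _ => Finset.sum_comm

private lemma numerator_le {V : Type*} (G : SimpleGraph V) (t s : Finset (Finset V))
    (ht : (t : Set (Finset V)).PairwiseDisjoint id)
    (hs : (s : Set (Finset V)).PairwiseDisjoint id)
    (htn : ∀ r ∈ t, r.Nonempty) (hsn : ∀ c ∈ s, c.Nonempty) :
    ((t.biUnion id).card : ℝ) * ((s.biUnion id).card : ℝ)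
        * density G (t.biUnion id) (s.biUnion id) ^ 2
      ≤ ∑ r ∈ t, ∑ c ∈ s, (r.card : ℝ) * (c.card : ℝ) * density G r c ^ 2 := by
  set R := t.biUnion id
  set S := s.biUnion id
  have hRHS : 0 ≤ ∑ r ∈ t, ∑ c ∈ s, (r.card : ℝ) * (c.card : ℝ) * density G r c ^ 2 := by
    refine Finset.sum_nonneg fun r _ => Finset.sum_nonneg fun c _ => ?_
    have := density_nonneg G r c
    positivity
  rcases eq_or_ne (R.card : ℝ) 0 with hR | hR
  · rw [hR]; simpa using hRHS
  rcases eq_or_ne (S.card : ℝ) 0 with hS | hS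
  · rw [hS]; simpa using hRHS
  have hRpos : (0:ℝ) < R.card := lt_of_le_of_ne (by positivity) (Ne.symm hR)
  have hSpos : (0:ℝ) < S.card := lt_of_le_of_ne (by positivity) (Ne.symm hS)
  have hcardR : (R.card : ℝ) = ∑ r ∈ t, (r.card : ℝ) := by
    rw [Finset.card_biUnion (fun a ha b hb hab => ht ha hb hab)]; push_cast; rfl
  have hcardS : (S.card : ℝ) = ∑ c ∈ s, (c.card : ℝ) := by
    rw [Finset.card_biUnion (fun a ha b hb hab => hs ha hb hab)]; push_cast; rfl
  have hE : (edgeCount G R S : ℝ) = ∑ r ∈ t, ∑ c ∈ s, (edgeCount G r c : ℝ) := by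
    rw [edgeCount_biUnion G t s ht hs]; push_cast; rfl
  -- Cauchy-Schwarz on t ×ˢ s
  have key := Finset.sum_mul_sq_le_sq_mul_sq (t ×ˢ s)
      (fun p => Real.sqrt ((p.1.card : ℝ) * (p.2.card : ℝ)))
      (fun p => Real.sqrt ((p.1.card : ℝ) * (p.2.card : ℝ)) * density G p.1 p.2)
  have hsq : ∀ p ∈ t ×ˢ s,
      Real.sqrt ((p.1.card : ℝ) * (p.2.card : ℝ)) ^ 2 = (p.1.card : ℝ) * (p.2.card : ℝ) := by
    intro p hp
    exact Real.sq_sqrt (by positivity)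
  have h1 : ∑ p ∈ t ×ˢ s,
      (Real.sqrt ((p.1.card : ℝ) * (p.2.card : ℝ))
        * (Real.sqrt ((p.1.card : ℝ) * (p.2.card : ℝ)) * density G p.1 p.2))
      = (edgeCount G R S : ℝ) := by
    rw [hE, ← Finset.sum_product']
    refine Finset.sum_congr rfl fun p hp => ?_
    have hp1 := htn p.1 (Finset.mem_product.1 hp).1
    have hp2 := hsn p.2 (Finset.mem_product.1 hp).2
    have h1pos : (0:ℝ) < p.1.card := by exact_mod_cast Finset.card_pos.2 hp1
    have h2pos : (0:ℝ) < p.2.card := by exact_mod_cast Finset.card_pos.2 hp2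
    have hab : Real.sqrt ((p.1.card:ℝ) * p.2.card) ^ 2 = (p.1.card:ℝ) * p.2.card :=
      Real.sq_sqrt (by positivity)
    rw [← mul_assoc, ← sq, hab]
    unfold density
    field_simp
  have h2 : ∑ p ∈ t ×ˢ s, Real.sqrt ((p.1.card : ℝ) * (p.2.card : ℝ)) ^ 2
      = (R.card : ℝ) * (S.card : ℝ) := by
    rw [hcardR, hcardS, Finset.sum_mul_sum, ← Finset.sum_product']
    exact Finset.sum_congr rfl hsq
  have h3 : ∑ p ∈ t ×ˢ s,
      (Real.sqrt ((p.1.card : ℝ) * (p.2.card : ℝ)) * density G p.1 p.2) ^ 2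
      = ∑ r ∈ t, ∑ c ∈ s, (r.card : ℝ) * (c.card : ℝ) * density G r c ^ 2 := by
    rw [← Finset.sum_product']
    refine Finset.sum_congr rfl fun p hp => ?_
    rw [mul_pow, hsq p hp]
  rw [h1, h2, h3] at key
  have hLHS : (R.card : ℝ) * (S.card : ℝ) * density G R S ^ 2
      = (edgeCount G R S : ℝ) ^ 2 / ((R.card : ℝ) * (S.card : ℝ)) := by
    unfold density
    field_simp
  rw [hLHS, div_le_iff₀ (by positivity)]
  linarith [key]

private lemma energy_le_sum {V : Type*} [Fintype V] (G : SimpleGraph V)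
    (t s : Finset (Finset V))
    (ht : (t : Set (Finset V)).PairwiseDisjoint id)
    (hs : (s : Set (Finset V)).PairwiseDisjoint id)
    (htn : ∀ r ∈ t, r.Nonempty) (hsn : ∀ c ∈ s, c.Nonempty) :
    energy G (t.biUnion id) (s.biUnion id) ≤ ∑ r ∈ t, ∑ c ∈ s, energy G r c := by
  unfold energy
  simp_rw [← Finset.sum_div]
  exact div_le_div_of_nonneg_right (numerator_le G t s ht hs htn hsn) (by positivity)

/-- Refining partitions cannot decrease the energy. -/
theorem energy_graph_partitions_increase {V : Type*} [Fintype V] (G : SimpleGraph V)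
    (A A' : Finset V) (P Q : Finpartition A) (P' Q' : Finpartition A')
    (hQ : ∀ S ∈ Q.parts, ∃ R ∈ P.parts, S ⊆ R)
    (hQ' : ∀ S ∈ Q'.parts, ∃ R ∈ P'.parts, S ⊆ R) :
    ∑ R ∈ P.parts, ∑ S ∈ P'.parts, energy G R S
      ≤ ∑ R ∈ Q.parts, ∑ S ∈ Q'.parts, energy G R S := by
  classical
  -- fiber decomposition
  have fib : ∀ (B : Finset V) (PP QQ : Finpartition B)
      (h : ∀ S ∈ QQ.parts, ∃ R ∈ PP.parts, S ⊆ R) (R : Finset V), R ∈ PP.parts →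
      ((QQ.parts.filter (· ⊆ R)).biUnion id = R ∧
        ∀ S ∈ QQ.parts.filter (· ⊆ R), S.Nonempty) := by
    intro B PP QQ h R hR
    constructor
    · apply Finset.Subset.antisymm
      · intro x hx
        obtain ⟨S, hS, hxS⟩ := Finset.mem_biUnion.1 hx
        exact (Finset.mem_filter.1 hS).2 hxS
      · intro x hx
        have hxB : x ∈ B := by
          have := PP.le hR
          exact this hx
        obtain ⟨S, hS, hxS⟩ := QQ.exists_mem hxB
        obtain ⟨R2, hR2, hSR2⟩ := h S hS
        have : R = R2 := by
          by_contra hne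
          exact Finset.disjoint_left.1 (PP.disjoint hR hR2 hne) hx (hSR2 hxS)
        refine Finset.mem_biUnion.2 ⟨S, Finset.mem_filter.2 ⟨hS, ?_⟩, hxS⟩
        rw [this]; exact hSR2
    · intro S hS
      exact Finset.nonempty_iff_ne_empty.2 (QQ.ne_bot (Finset.mem_filter.1 hS).1)
  -- map each Q-part to its P-part
  have regroup : ∀ (B : Finset V) (PP QQ : Finpartition B)
      (h : ∀ S ∈ QQ.parts, ∃ R ∈ PP.parts, S ⊆ R) (f : Finset V → ℝ),
      ∑ S ∈ QQ.parts, f S = ∑ R ∈ PP.parts, ∑ S ∈ QQ.parts.filter (· ⊆ R), f S := by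
    intro B PP QQ h f
    have hdisj : (PP.parts : Set (Finset V)).PairwiseDisjoint
        (fun R => QQ.parts.filter (· ⊆ R)) := by
      intro R1 h1 R2 h2 hne
      refine Finset.disjoint_left.2 fun S hS1 hS2 => ?_
      have hS := (Finset.mem_filter.1 hS1).1
      obtain ⟨x, hx⟩ := Finset.nonempty_iff_ne_empty.2 (QQ.ne_bot hS)
      exact Finset.disjoint_left.1 (PP.disjoint h1 h2 hne)
        ((Finset.mem_filter.1 hS1).2 hx) ((Finset.mem_filter.1 hS2).2 hx)
    have hcover : PP.parts.biUnion (fun R => QQ.parts.filter (· ⊆ R)) = QQ.parts := by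
      ext S
      simp only [Finset.mem_biUnion, Finset.mem_filter]
      constructor
      · rintro ⟨R, _, hS, _⟩; exact hS
      · intro hS; obtain ⟨R, hR, hSR⟩ := h S hS; exact ⟨R, hR, hS, hSR⟩
    rw [← Finset.sum_biUnion hdisj, hcover]
  have key : ∀ R ∈ P.parts, ∀ S ∈ P'.parts,
      energy G R S ≤ ∑ r ∈ Q.parts.filter (· ⊆ R), ∑ c ∈ Q'.parts.filter (· ⊆ S),
        energy G r c := by
    intro R hR S hS
    obtain ⟨hRU, hRn⟩ := fib A P Q hQ R hR
    obtain ⟨hSU, hSn⟩ := fib A' P' Q' hQ' S hS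
    have h := energy_le_sum G (Q.parts.filter (· ⊆ R)) (Q'.parts.filter (· ⊆ S))
      (Q.disjoint.subset (Finset.coe_subset.2 (Finset.filter_subset _ _)))
      (Q'.disjoint.subset (Finset.coe_subset.2 (Finset.filter_subset _ _))) hRn hSn
    rwa [hRU, hSU] at h
  calc ∑ R ∈ P.parts, ∑ S ∈ P'.parts, energy G R S
      ≤ ∑ R ∈ P.parts, ∑ S ∈ P'.parts, ∑ r ∈ Q.parts.filter (· ⊆ R),
          ∑ c ∈ Q'.parts.filter (· ⊆ S), energy G r c :=
        Finset.sum_le_sum fun R hR => Finset.sum_le_sum fun S hS => key R hR S hS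
    _ = ∑ R ∈ P.parts, ∑ r ∈ Q.parts.filter (· ⊆ R), ∑ S ∈ P'.parts,
          ∑ c ∈ Q'.parts.filter (· ⊆ S), energy G r c :=
        Finset.sum_congr rfl fun R _ => Finset.sum_comm
    _ = ∑ r ∈ Q.parts, ∑ S ∈ P'.parts, ∑ c ∈ Q'.parts.filter (· ⊆ S), energy G r c :=
        (regroup A P Q hQ _).symm
    _ = ∑ r ∈ Q.parts, ∑ c ∈ Q'.parts, energy G r c :=
        Finset.sum_congr rfl fun r _ => (regroup A' P' Q' hQ' _).symm
end

section
/- If V is a finite vertex set of a finite simple graph G and the partition Q of V refines the partition P of V, then the mean square density of Q is at least the mean square density of P. -/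
open Finset
open scoped Classical

/-! Once a part `R` of `P` is split into the parts of `Q` inside it, `e(R,R')` and `|R| |R'|` are
the sums of `e(S,S')` and `|S| |S'|` over the pieces `S ⊆ R`, `S' ⊆ R'`, so by the Cauchy–Schwarz
inequality in Sedrakyan's form `(∑ aᵢ)² / ∑ bᵢ ≤ ∑ aᵢ² / bᵢ` the energy of the pair `(R,R')` is at
most the total energy of its pieces. Summing over all pairs of parts of `P` gives the theorem. -/

theorem Finpartition.sum_parts_inter_eq_of_subset {α M : Type*} [AddCommMonoid M] {A : Finset α}
    (P : Finpartition A) {R S : Finset α} (hR : R ∈ P.parts) (hSR : S ⊆ R)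
    (g : Finset α → M) (hg : g ∅ = 0) :
    ∑ R' ∈ P.parts, g (S ∩ R') = g S := by
  rw [sum_eq_single_of_mem R hR, inter_eq_left.2 hSR]
  intro R' hR' hne
  have hdisj : Disjoint S R' := (P.disjoint hR hR' hne.symm).mono_left hSR
  rw [disjoint_iff_inter_eq_empty.1 hdisj, hg]

lemma edgeCount_eq_card_interedges {V : Type*} (G : SimpleGraph V) (X Y : Finset V) :
    edgeCount G X Y = #(G.interedges X Y) := by
  unfold edgeCount SimpleGraph.interedges Rel.interedges
  congr

section Energy

variable {V : Type*} [Fintype V] (G : SimpleGraph V)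

-- No nonemptiness is needed: for an empty set both sides are `0`, using `x / 0 = 0`.
lemma energy_eq_edgeCount_sq_div (U W : Finset V) :
    energy G U W = (edgeCount G U W : ℝ) ^ 2 / (#U * #W) / (Fintype.card V : ℝ) ^ 2 := by
  unfold energy density
  rcases eq_or_ne ((#U : ℝ) * #W) 0 with h | h
  · simp [h]
  · field_simp

@[simp] lemma energy_empty_left (W : Finset V) : energy G ∅ W = 0 := by simp [energy]

@[simp] lemma energy_empty_right (U : Finset V) : energy G U ∅ = 0 := by simp [energy]

theorem energy_le_sum_energy_s9 {U W : Finset V} (P : Finpartition U) (Q : Finpartition W) :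
    energy G U W ≤ ∑ S ∈ P.parts, ∑ T ∈ Q.parts, energy G S T := by
  have edgeCount_eq :
      (edgeCount G U W : ℝ) = ∑ p ∈ P.parts ×ˢ Q.parts, (edgeCount G p.1 p.2 : ℝ) := by
    simp only [edgeCount_eq_card_interedges, SimpleGraph.interedges,
      Rel.card_interedges_finpartition G.Adj P Q, Nat.cast_sum]
  have card_mul_eq : (#U : ℝ) * #W = ∑ p ∈ P.parts ×ˢ Q.parts, (#p.1 : ℝ) * #p.2 := by
    rw [← P.sum_card_parts, ← Q.sum_card_parts, sum_product]
    push_cast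
    exact sum_mul_sum _ _ _ _
  have card_mul_pos : ∀ p ∈ P.parts ×ˢ Q.parts, (0 : ℝ) < #p.1 * #p.2 := fun p hp => by
    obtain ⟨hS, hT⟩ := mem_product.1 hp
    have := (P.nonempty_of_mem_parts hS).card_pos
    have := (Q.nonempty_of_mem_parts hT).card_pos
    positivity
  simp only [energy_eq_edgeCount_sq_div, ← sum_div, ← sum_product']
  gcongr
  rw [edgeCount_eq, card_mul_eq]
  exact sq_sum_div_le_sum_sq_div _ _ card_mul_pos

theorem energy_le_sum_energy_inter {A U W : Finset V} (Q : Finpartition A) (hU : U ⊆ A)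
    (hW : W ⊆ A) :
    energy G U W ≤ ∑ S ∈ Q.parts, ∑ T ∈ Q.parts, energy G (S ∩ U) (T ∩ W) := by
  calc energy G U W ≤ _ := energy_le_sum_energy_s9 G (Q.restrict hU) (Q.restrict hW)
    _ = _ := by
      rw [Finpartition.sum_restrict _ _ _ (by simp)]
      refine sum_congr rfl fun S _ => ?_
      rw [Finpartition.sum_restrict _ _ _ (by simp)]
      rfl

end Energy

/-- Refining a partition cannot decrease the mean square density. -/
theorem mean_square_density_increase {V : Type*} [Fintype V] (G : SimpleGraph V)
    (A : Finset V) (P Q : Finpartition A)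
    (hQ : ∀ S ∈ Q.parts, ∃ R ∈ P.parts, S ⊆ R) :
    meanSquareDensity G P.parts ≤ meanSquareDensity G Q.parts := by
  calc meanSquareDensity G P.parts
      = ∑ R ∈ P.parts, ∑ R' ∈ P.parts, energy G R R' := rfl
    _ ≤ ∑ R ∈ P.parts, ∑ R' ∈ P.parts, ∑ S ∈ Q.parts, ∑ T ∈ Q.parts,
          energy G (S ∩ R) (T ∩ R') := by
      gcongr with R hR R' hR'
      exact energy_le_sum_energy_inter G Q (P.le hR) (P.le hR')
    _ = ∑ S ∈ Q.parts, ∑ T ∈ Q.parts, ∑ R ∈ P.parts, ∑ R' ∈ P.parts,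
          energy G (S ∩ R) (T ∩ R') := by
      simp only [sum_comm (s := P.parts) (t := Q.parts)]
    _ = meanSquareDensity G Q.parts := by
      refine sum_congr rfl fun S hS => sum_congr rfl fun T hT => ?_
      obtain ⟨R, hR, hSR⟩ := hQ S hS
      obtain ⟨R', hR', hTR'⟩ := hQ T hT
      rw [P.sum_parts_inter_eq_of_subset hR hSR (fun X => ∑ R' ∈ P.parts, energy G X (T ∩ R'))
        (by simp)]
      exact P.sum_parts_inter_eq_of_subset hR' hTR' _ (by simp)
end
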